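/- Let A₀, A₁, …, A_m ∈ ℂ^{k×ℓ} with m ≥ 1, let E₀, …, E_m ∈ ℂ^{k×ℓ} be error matrices, and let (λ̂, x̂) ∈ ℂ^m × ℂ^ℓ with x̂ ≠ 0. Set r̂ = W(λ̂) x̂ and γ̂ = ‖E₀‖ + Σ_{i=1}^m |λ̂_i| ‖E_i‖, and assume γ̂ > 0. Then the set of all ε ≥ 0 for which there exist perturbation matrices ΔA₀, …, ΔA_m ∈ ℂ^{k×ℓ} satisfying ‖ΔA_i‖ ≤ ε ‖E_i‖ for all i = 0, …, m and (A₀ + ΔA₀) x̂ + Σ_{i=1}^m λ̂_i (A_i + ΔA_i) x̂ = 0 has a least element, and this least element equals ‖r̂‖ / (γ̂ ‖x̂‖). -/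

import Mathlib

open scoped ComplexOrder

noncomputable def euclNorm {n : ℕ} (x : Fin n → ℂ) : ℝ :=
  ‖(WithLp.equiv 2 (Fin n → ℂ)).symm x‖

noncomputable def opNorm2 {k l : ℕ} (M : Matrix (Fin k) (Fin l) ℂ) : ℝ :=
  ‖LinearMap.toContinuousLinearMap (Matrix.toEuclideanLin M)‖

noncomputable def sigmaMin {k l : ℕ} (M : Matrix (Fin k) (Fin l) ℂ) : ℝ :=
  sInf {r : ℝ | ∃ x : Fin l → ℂ, euclNorm x = 1 ∧ r = euclNorm (M.mulVec x)}

noncomputable def pencil {m k l : ℕ} (A : Fin (m + 1) → Matrix (Fin k) (Fin l) ℂ)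
    (lam : Fin m → ℂ) : Matrix (Fin k) (Fin l) ℂ :=
  A 0 + ∑ i : Fin m, lam i • A i.succ

noncomputable def gammaVal {m k l : ℕ} (E : Fin (m + 1) → Matrix (Fin k) (Fin l) ℂ)
    (lam : Fin m → ℂ) : ℝ :=
  opNorm2 (E 0) + ∑ i : Fin m, ‖lam i‖ * opNorm2 (E i.succ)

/-!
Write the pencil as `∑ μᵢ • Aᵢ` with `μ = (1, λ̂)`. If `A + ΔA` annihilates `x̂` at `λ̂`, then
`W_{ΔA}(λ̂) x̂ = -r̂`, so `‖r̂‖ ≤ ∑ |μᵢ| ‖ΔAᵢ‖ ‖x̂‖ ≤ ε γ̂ ‖x̂‖`. The bound is attained by the rank-one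
perturbations `ΔAᵢ = -(dᵢ / ‖x̂‖²) r̂ x̂ᴴ` with `dᵢ = (conj μᵢ / |μᵢ|) ‖Eᵢ‖ / γ̂`: these weights
satisfy `∑ μᵢ dᵢ = 1` and `|dᵢ| γ̂ ≤ ‖Eᵢ‖`, and `‖r̂ x̂ᴴ‖ = ‖r̂‖ ‖x̂‖`.
-/

open scoped Matrix.Norms.L2Operator
open Matrix

lemma l2_opNorm_vecMulVec_star {𝕜 m n : Type*} [RCLike 𝕜] [Fintype m] [Fintype n] [DecidableEq n]
    (u : m → 𝕜) (v : n → 𝕜) :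
    ‖vecMulVec u (star v)‖ = ‖WithLp.toLp 2 u‖ * ‖WithLp.toLp 2 v‖ := by
  rw [← InnerProductSpace.symm_toEuclideanLin_rankOne, l2_opNorm_def, LinearEquiv.trans_apply,
    LinearEquiv.apply_symm_apply, ← InnerProductSpace.norm_rankOne (𝕜 := 𝕜)]
  rfl

lemma star_dotProduct_self_eq {𝕜 n : Type*} [RCLike 𝕜] [Fintype n] (x : n → 𝕜) :
    star x ⬝ᵥ x = (‖WithLp.toLp 2 x‖ : 𝕜) ^ 2 := by
  rw [← inner_self_eq_norm_sq_to_K, EuclideanSpace.inner_eq_star_dotProduct, dotProduct_comm]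

lemma vecMulVec_star_mulVec_self {𝕜 m n : Type*} [RCLike 𝕜] [Fintype n] (v : m → 𝕜) (x : n → 𝕜) :
    vecMulVec v (star x) *ᵥ x = (‖WithLp.toLp 2 x‖ ^ 2 : 𝕜) • v := by
  rw [vecMulVec_mulVec, op_smul_eq_smul, star_dotProduct_self_eq]

lemma exists_norm_le_div_and_sum_mul_eq_one {𝕜 ι : Type*} [RCLike 𝕜] [Fintype ι] (μ : ι → 𝕜)
    {w : ι → ℝ} (hw : ∀ i, 0 ≤ w i) (hγ : 0 < ∑ i, ‖μ i‖ * w i) :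
    ∃ d : ι → 𝕜, (∀ i, ‖d i‖ ≤ w i / ∑ j, ‖μ j‖ * w j) ∧ ∑ i, μ i * d i = 1 := by
  set γ := ∑ i, ‖μ i‖ * w i
  refine ⟨fun i => star (μ i) / ‖μ i‖ * (w i / γ : ℝ), fun i => ?_, ?_⟩
  · have hwγ : 0 ≤ w i / γ := div_nonneg (hw i) hγ.le
    rw [norm_mul, norm_div, norm_star, RCLike.norm_ofReal, RCLike.norm_ofReal, abs_norm,
      abs_of_nonneg hwγ]
    exact mul_le_of_le_one_left hwγ (div_self_le_one _)
  · have hterm : ∀ i, μ i * (star (μ i) / ‖μ i‖ * (w i / γ : ℝ)) = (‖μ i‖ * w i / γ : ℝ) := by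
      intro i
      rcases eq_or_ne (μ i) 0 with h | h
      · simp [h]
      · rw [← mul_assoc, mul_div_assoc', RCLike.star_def, RCLike.mul_conj]
        have : (‖μ i‖ : 𝕜) ≠ 0 := by simpa using h
        push_cast
        field_simp
    simp only [hterm]
    rw [← RCLike.ofReal_sum, ← Finset.sum_div, div_self hγ.ne', RCLike.ofReal_one]

lemma opNorm2_eq_norm {k l : ℕ} (M : Matrix (Fin k) (Fin l) ℂ) : opNorm2 M = ‖M‖ := rfl

lemma euclNorm_eq_norm {n : ℕ} (x : Fin n → ℂ) : euclNorm x = ‖WithLp.toLp 2 x‖ := rfl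

lemma opNorm2_nonneg {k l : ℕ} (M : Matrix (Fin k) (Fin l) ℂ) : 0 ≤ opNorm2 M := norm_nonneg _

lemma euclNorm_pos {n : ℕ} {x : Fin n → ℂ} (hx : x ≠ 0) : 0 < euclNorm x :=
  norm_pos_iff.mpr (by simpa using hx)

lemma euclNorm_mulVec_le {k l : ℕ} (M : Matrix (Fin k) (Fin l) ℂ) (y : Fin l → ℂ) :
    euclNorm (M *ᵥ y) ≤ opNorm2 M * euclNorm y :=
  l2_opNorm_mulVec M (WithLp.toLp 2 y)

def pencilCoeffs {m : ℕ} (lam : Fin m → ℂ) : Fin (m + 1) → ℂ := Fin.cons 1 lam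

lemma pencil_eq_sum {m k l : ℕ} (A : Fin (m + 1) → Matrix (Fin k) (Fin l) ℂ) (lam : Fin m → ℂ) :
    pencil A lam = ∑ i, pencilCoeffs lam i • A i := by
  simp [pencil, Fin.sum_univ_succ, pencilCoeffs]

lemma gammaVal_eq_sum {m k l : ℕ} (E : Fin (m + 1) → Matrix (Fin k) (Fin l) ℂ)
    (lam : Fin m → ℂ) : gammaVal E lam = ∑ i, ‖pencilCoeffs lam i‖ * opNorm2 (E i) := by
  simp [gammaVal, Fin.sum_univ_succ, pencilCoeffs]

lemma pencil_add {m k l : ℕ} (A B : Fin (m + 1) → Matrix (Fin k) (Fin l) ℂ) (lam : Fin m → ℂ) :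
    pencil (fun i => A i + B i) lam = pencil A lam + pencil B lam := by
  simp only [pencil_eq_sum, smul_add, Finset.sum_add_distrib]

lemma pencil_smul_const {m k l : ℕ} (c : Fin (m + 1) → ℂ) (M : Matrix (Fin k) (Fin l) ℂ)
    (lam : Fin m → ℂ) : pencil (fun i => c i • M) lam = (∑ i, pencilCoeffs lam i * c i) • M := by
  simp only [pencil_eq_sum, smul_smul, Finset.sum_smul]

lemma opNorm2_pencil_le {m k l : ℕ} (A : Fin (m + 1) → Matrix (Fin k) (Fin l) ℂ)
    (lam : Fin m → ℂ) : opNorm2 (pencil A lam) ≤ gammaVal A lam := by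
  simp only [opNorm2_eq_norm, pencil_eq_sum, gammaVal_eq_sum]
  exact (norm_sum_le _ _).trans_eq (by simp only [norm_smul])

lemma gammaVal_le_of_opNorm2_le {m k l : ℕ} {B E : Fin (m + 1) → Matrix (Fin k) (Fin l) ℂ}
    (lam : Fin m → ℂ) {ε : ℝ} (h : ∀ i, opNorm2 (B i) ≤ ε * opNorm2 (E i)) :
    gammaVal B lam ≤ ε * gammaVal E lam := by
  rw [gammaVal_eq_sum, gammaVal_eq_sum, Finset.mul_sum]
  refine Finset.sum_le_sum fun i _ => ?_
  rw [mul_left_comm]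
  exact mul_le_mul_of_nonneg_left (h i) (norm_nonneg _)

lemma euclNorm_residual_le {m k l : ℕ} {A E ΔA : Fin (m + 1) → Matrix (Fin k) (Fin l) ℂ}
    {lam : Fin m → ℂ} {x : Fin l → ℂ} {ε : ℝ} (hΔ : ∀ i, opNorm2 (ΔA i) ≤ ε * opNorm2 (E i))
    (hker : (pencil (fun i => A i + ΔA i) lam) *ᵥ x = 0) :
    euclNorm (pencil A lam *ᵥ x) ≤ ε * gammaVal E lam * euclNorm x := by
  rw [pencil_add, add_mulVec, add_eq_zero_iff_eq_neg] at hker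
  calc euclNorm (pencil A lam *ᵥ x) = euclNorm (pencil ΔA lam *ᵥ x) := by
        rw [hker, euclNorm_eq_norm, euclNorm_eq_norm, WithLp.toLp_neg, norm_neg]
    _ ≤ opNorm2 (pencil ΔA lam) * euclNorm x := euclNorm_mulVec_le _ _
    _ ≤ ε * gammaVal E lam * euclNorm x := by
        gcongr
        · exact norm_nonneg _
        · exact (opNorm2_pencil_le ΔA lam).trans (gammaVal_le_of_opNorm2_le lam hΔ)

lemma exists_perturbation_of_residual {m k l : ℕ} (A E : Fin (m + 1) → Matrix (Fin k) (Fin l) ℂ)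
    (lam : Fin m → ℂ) {x : Fin l → ℂ} (hx : x ≠ 0) (hγ : 0 < gammaVal E lam) :
    ∃ ΔA : Fin (m + 1) → Matrix (Fin k) (Fin l) ℂ,
      (∀ i, opNorm2 (ΔA i) ≤
        euclNorm (pencil A lam *ᵥ x) / (gammaVal E lam * euclNorm x) * opNorm2 (E i)) ∧
      (pencil (fun i => A i + ΔA i) lam) *ᵥ x = 0 := by
  set r := pencil A lam *ᵥ x
  have hxpos := euclNorm_pos hx
  rw [gammaVal_eq_sum] at hγ ⊢
  obtain ⟨d, hd, hsum⟩ :=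
    exists_norm_le_div_and_sum_mul_eq_one (pencilCoeffs lam) (fun i => opNorm2_nonneg (E i)) hγ
  set s : ℂ := (euclNorm x : ℂ) ^ 2
  have hs : s ≠ 0 := pow_ne_zero _ (by exact_mod_cast hxpos.ne')
  refine ⟨fun i => (-(d i) / s) • vecMulVec r (star x), fun i => ?_, ?_⟩
  · have hnorm : opNorm2 ((-(d i) / s) • vecMulVec r (star x))
        = ‖d i‖ / euclNorm x ^ 2 * (euclNorm r * euclNorm x) := by
      rw [opNorm2_eq_norm, norm_smul, l2_opNorm_vecMulVec_star, norm_div, norm_neg, norm_pow,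
        Complex.norm_real, Real.norm_of_nonneg hxpos.le]
      rfl
    rw [hnorm]
    calc ‖d i‖ / euclNorm x ^ 2 * (euclNorm r * euclNorm x)
        ≤ opNorm2 (E i) / (∑ j, ‖pencilCoeffs lam j‖ * opNorm2 (E j)) / euclNorm x ^ 2 *
            (euclNorm r * euclNorm x) := by
          gcongr
          · exact mul_nonneg (norm_nonneg _) hxpos.le
          · exact hd i
      _ = _ := by field_simp
  · rw [pencil_add, pencil_smul_const, add_mulVec, smul_mulVec, vecMulVec_star_mulVec_self,
      smul_smul]
    have hcoeff : (∑ i, pencilCoeffs lam i * (-(d i) / s)) * s = -1 := by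
      simp only [mul_div_assoc', mul_neg, Finset.sum_neg_distrib, ← Finset.sum_div]
      rw [neg_div, hsum, neg_mul, one_div_mul_cancel hs]
    -- `RCLike.ofReal` and the `Complex.ofReal` coercion agree only up to unfolding
    erw [← euclNorm_eq_norm, hcoeff, neg_one_smul, add_neg_cancel]

theorem eigenpair_backward_error_general {m k l : ℕ}
    (A E : Fin (m + 1) → Matrix (Fin k) (Fin l) ℂ)
    (lam : Fin m → ℂ) (x : Fin l → ℂ) (hx : x ≠ 0)
    (r : Fin k → ℂ) (hr : r = (pencil A lam).mulVec x)
    (hγ : 0 < gammaVal E lam) :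
    IsLeast {ε : ℝ | 0 ≤ ε ∧ ∃ ΔA : Fin (m + 1) → Matrix (Fin k) (Fin l) ℂ,
        (∀ i, opNorm2 (ΔA i) ≤ ε * opNorm2 (E i)) ∧
        (pencil (fun i => A i + ΔA i) lam).mulVec x = 0}
      (euclNorm r / (gammaVal E lam * euclNorm x)) := by
  subst hr
  have hden : 0 < gammaVal E lam * euclNorm x := mul_pos hγ (euclNorm_pos hx)
  refine ⟨⟨div_nonneg (norm_nonneg _) hden.le, exists_perturbation_of_residual A E lam hx hγ⟩, ?_⟩
  rintro ε ⟨-, ΔA, hΔ, hker⟩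
  rw [div_le_iff₀ hden, ← mul_assoc]
  exact euclNorm_residual_le hΔ hker

/-- the norm-wise backward error of an approximate eigenpair
`(λ̂, x̂)` equals `‖r̂‖ / (γ̂ ‖x̂‖)`. -/
theorem eigenpair_backward_error {m k l : ℕ} (hm : 1 ≤ m)
    (A E : Fin (m + 1) → Matrix (Fin k) (Fin l) ℂ)
    (lam : Fin m → ℂ) (x : Fin l → ℂ) (hx : x ≠ 0)
    (r : Fin k → ℂ) (hr : r = (pencil A lam).mulVec x)
    (hγ : 0 < gammaVal E lam) :
    IsLeast {ε : ℝ | 0 ≤ ε ∧ ∃ ΔA : Fin (m + 1) → Matrix (Fin k) (Fin l) ℂ,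
        (∀ i, opNorm2 (ΔA i) ≤ ε * opNorm2 (E i)) ∧
        (pencil (fun i => A i + ΔA i) lam).mulVec x = 0}
      (euclNorm r / (gammaVal E lam * euclNorm x)) :=
  eigenpair_backward_error_general A E lam x hx r hr hγ
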